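/- Fix integers ℓ ≥ 2 and m with 1 ≤ m < ℓ, and define w : ℤ → ℂ by w(n) = e(nm/ℓ) for n ≥ 1 and w(n) = 0 otherwise, where e(t) = e^{2πit}. Then |w(n)| ≤ 1 for all n, and for every positive integer H: (i) 𝒞_{w_H}(a) = e(am/ℓ)·max(H − |a|, 0) for every integer a; (ii) Σ_{a≡0 (mod ℓ)} 𝒞_{w_H}(a) = H²/ℓ + O(H) with an absolute implied constant; (iii) Σ_{a∈ℤ} 𝒞_{w_H}(a) = |Σ_{h≤ℓ·{H/ℓ}} e(hm/ℓ)|² ≪ ℓ², where {·} denotes the fractional part. Consequently w is absolutely bounded but not an arithmetic weight: there is no constant C such that |Σ_{a≡0 (mod ℓ)} 𝒞_{w_H}(a) − (1/ℓ)·Σ_{a∈ℤ} 𝒞_{w_H}(a)| ≤ C·H holds for all H. -/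

import Mathlib

/-!
On `[1, H]` the weight is the character `n ↦ e(nm/ℓ)`, so `w_H(n) · conj w_H(n - a) = e(am/ℓ)` on an
interval of `max(H - |a|, 0)` integers. For `ℓ ∣ a` the phase is `1`, and the diagonal sum is a
lattice-point count under a tent: `ℓ · Σ = H² + r(ℓ - r)` with `r = H mod ℓ`. The full sum factors as
`|Σ_{h ≤ H} e(hm/ℓ)|²`, and whole periods of this geometric sum vanish since `e(m/ℓ) ≠ 1`, leaving at
most `ℓ` terms. So the two sides of the arithmetic-weight condition differ by `H²/ℓ + O(H + ℓ)`.
-/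

/-- `e(t) = e^{2πit}`. -/
noncomputable def eC (t : ℝ) : ℂ := Complex.exp (2 * Real.pi * Complex.I * t)

/-- The restriction `w_H` of a weight `w` to `[-H,H]`. -/
noncomputable def wres (w : ℤ → ℂ) (H : ℕ) (a : ℤ) : ℂ := if |a| ≤ (H : ℤ) then w a else 0

/-- The correlation `𝒞_{w_H}(a) = Σ_m w_H(m)·conj(w_H(m-a))`. -/
noncomputable def corrW (w : ℤ → ℂ) (H : ℕ) (a : ℤ) : ℂ :=
  ∑ m ∈ Finset.Icc (-(H : ℤ)) (H : ℤ), wres w H m * (starRingEnd ℂ) (wres w H (m - a))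

lemma eC_add (s t : ℝ) : eC (s + t) = eC s * eC t := by
  simp only [eC, ← Complex.exp_add]; push_cast; ring_nf

lemma norm_eC (t : ℝ) : ‖eC t‖ = 1 := by
  simp [eC, Complex.norm_exp]

lemma conj_eC (t : ℝ) : starRingEnd ℂ (eC t) = eC (-t) := by
  simp [eC, ← Complex.exp_conj, Complex.conj_ofNat]

lemma eC_intCast (k : ℤ) : eC k = 1 := by
  rw [eC, ← Complex.exp_int_mul_two_pi_mul_I k]; push_cast; ring_nf

lemma eC_pow (t : ℝ) (n : ℕ) : eC t ^ n = eC (n * t) := by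
  rw [eC, eC, ← Complex.exp_nat_mul]; push_cast; ring_nf

lemma eC_div_ne_one {m ℓ : ℕ} (hℓ : 0 < ℓ) (hm : ¬ ℓ ∣ m) : eC ((m : ℝ) / ℓ) ≠ 1 := by
  intro h
  obtain ⟨k, hk⟩ := Complex.exp_eq_one_iff.mp h
  have hkℓ : (m : ℝ) = k * ℓ := by
    have h2pi : (2 * Real.pi * Complex.I) ≠ 0 := by simp [Real.pi_ne_zero]
    have : ((m / ℓ : ℝ) : ℂ) = k := mul_left_cancel₀ h2pi (by rw [hk]; ring)
    have : (m / ℓ : ℝ) = k := by exact_mod_cast this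
    rwa [div_eq_iff (by positivity)] at this
  exact hm (Int.natCast_dvd_natCast.mp ⟨k, by rw [mul_comm]; exact_mod_cast hkℓ⟩)

lemma sum_Icc_one_pow_eq_mod {R : Type*} [CommRing R] [IsDomain R] {z : R} {ℓ : ℕ}
    (hz : z ^ ℓ = 1) (hz1 : z ≠ 1) (N : ℕ) :
    ∑ h ∈ Finset.Icc 1 N, z ^ h = ∑ h ∈ Finset.Icc 1 (N % ℓ), z ^ h := by
  have hgeom (n : ℕ) : (∑ h ∈ Finset.Icc 1 n, z ^ h) * (z - 1) = z * z ^ n - z := by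
    rw [← Finset.Ico_add_one_right_eq_Icc, geom_sum_Ico_mul z (by omega), pow_succ', pow_one]
  refine mul_right_cancel₀ (sub_ne_zero.mpr hz1) ?_
  rw [hgeom, hgeom, ← pow_eq_pow_mod N hz]

lemma sum_Icc_eC_eq_mod {ℓ m : ℕ} (hℓ : 0 < ℓ) (hm : ¬ ℓ ∣ m) (N : ℕ) :
    ∑ h ∈ Finset.Icc 1 N, eC (h * m / ℓ) = ∑ h ∈ Finset.Icc 1 (N % ℓ), eC (h * m / ℓ) := by
  have hpow (h : ℕ) : eC (h * m / ℓ) = eC (m / ℓ) ^ h := by rw [eC_pow, mul_div_assoc]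
  have hroot : eC (m / ℓ) ^ ℓ = 1 := by
    rw [eC_pow, mul_div_cancel₀ _ (by positivity), ← Int.cast_natCast, eC_intCast]
  simp only [hpow]
  exact sum_Icc_one_pow_eq_mod hroot (eC_div_ne_one hℓ hm) N

lemma sum_corrW_eq_mul_conj (w : ℤ → ℂ) (H : ℕ) :
    ∑ a ∈ Finset.Icc (-(2 * H : ℤ)) (2 * H), corrW w H a =
      (∑ b ∈ Finset.Icc (-(H : ℤ)) H, wres w H b) *
        starRingEnd ℂ (∑ b ∈ Finset.Icc (-(H : ℤ)) H, wres w H b) := by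
  simp only [corrW]
  rw [Finset.sum_comm, Finset.sum_mul, map_sum]
  refine Finset.sum_congr rfl fun n hn ↦ ?_
  rw [← Finset.mul_sum]
  congr 1
  simp only [Finset.mem_Icc] at hn
  have hreflect : ∑ a ∈ Finset.Icc (-(2 * H : ℤ)) (2 * H), starRingEnd ℂ (wres w H (n - a)) =
      ∑ b ∈ Finset.Icc (n - 2 * H) (n + 2 * H), starRingEnd ℂ (wres w H b) :=
    Finset.sum_nbij' (n - ·) (n - ·)
      (fun a ha ↦ by simp only [Finset.mem_Icc] at *; omega)
      (fun b hb ↦ by simp only [Finset.mem_Icc] at *; omega)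
      (fun a _ ↦ sub_sub_cancel n a) (fun b _ ↦ sub_sub_cancel n b) (fun _ _ ↦ rfl)
  rw [hreflect]
  refine (Finset.sum_subset (Finset.Icc_subset_Icc (by omega) (by omega)) fun b _ hb ↦ ?_).symm
  simp only [Finset.mem_Icc] at hb
  rw [wres, if_neg (by rw [abs_le]; omega), map_zero]

lemma filter_dvd_Icc_eq_image {ℓ : ℕ} (hℓ : 0 < ℓ) (N : ℕ) :
    (Finset.Icc (-(N : ℤ)) N).filter ((ℓ : ℤ) ∣ ·) =
      (Finset.Icc (-((N / ℓ : ℕ) : ℤ)) (N / ℓ : ℕ)).image ((ℓ : ℤ) * ·) := by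
  have hℓz : (0 : ℤ) < ℓ := by exact_mod_cast hℓ
  ext x
  simp only [Finset.mem_filter, Finset.mem_image, Finset.mem_Icc, Int.natCast_div,
    Int.le_ediv_iff_mul_le hℓz, neg_le]
  constructor
  · rintro ⟨⟨h1, h2⟩, c, rfl⟩
    exact ⟨c, ⟨by nlinarith, by nlinarith⟩, rfl⟩
  · rintro ⟨k, ⟨h1, h2⟩, rfl⟩
    exact ⟨⟨by nlinarith, by nlinarith⟩, dvd_mul_right _ _⟩

lemma sum_Icc_neg_abs (q : ℕ) : ∑ k ∈ Finset.Icc (-(q : ℤ)) q, |k| = q * (q + 1) := by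
  induction q with
  | zero => simp
  | succ n ih =>
    have hs : Finset.Icc (-((n + 1 : ℕ) : ℤ)) ((n + 1 : ℕ) : ℤ) =
        insert (-(n + 1 : ℤ)) (insert ((n : ℤ) + 1) (Finset.Icc (-(n : ℤ)) n)) := by
      ext x; simp only [Finset.mem_Icc, Finset.mem_insert]; omega
    rw [hs, Finset.sum_insert (by simp only [Finset.mem_insert, Finset.mem_Icc]; omega),
      Finset.sum_insert (by simp only [Finset.mem_Icc]; omega), ih,
      abs_of_nonpos (by omega), abs_of_nonneg (by omega)]
    push_cast
    ring

lemma mul_sum_filter_dvd_triangle {ℓ : ℕ} (hℓ : 0 < ℓ) (H : ℕ) :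
    (ℓ : ℤ) * ∑ a ∈ (Finset.Icc (-(2 * H : ℤ)) (2 * H)).filter ((ℓ : ℤ) ∣ ·), max ((H : ℤ) - |a|) 0
      = H ^ 2 + (H % ℓ : ℕ) * (ℓ - (H % ℓ : ℕ)) := by
  have hshrink : ∑ a ∈ (Finset.Icc (-(H : ℤ)) H).filter ((ℓ : ℤ) ∣ ·), max ((H : ℤ) - |a|) 0 =
      ∑ a ∈ (Finset.Icc (-(2 * H : ℤ)) (2 * H)).filter ((ℓ : ℤ) ∣ ·), max ((H : ℤ) - |a|) 0 := by
    refine Finset.sum_subset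
      (Finset.filter_subset_filter _ (Finset.Icc_subset_Icc (by omega) (by omega)))
      fun a ha hna ↦ ?_
    simp only [Finset.mem_filter, Finset.mem_Icc] at ha hna
    exact max_eq_right (by rw [sub_nonpos, le_abs]; omega)
  rw [← hshrink, filter_dvd_Icc_eq_image hℓ,
    Finset.sum_image fun x _ y _ h ↦ mul_left_cancel₀ (by omega) h]
  set q := H / ℓ
  set r := H % ℓ
  have hH : (H : ℤ) = ℓ * q + r := by exact_mod_cast (Nat.div_add_mod H ℓ).symm
  have hterm : ∀ k ∈ Finset.Icc (-(q : ℤ)) q, max ((H : ℤ) - |ℓ * k|) 0 = H - ℓ * |k| := by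
    intro k hk
    have hk' : |k| ≤ q := abs_le.mpr (Finset.mem_Icc.mp hk)
    rw [abs_mul, Nat.abs_cast, max_eq_left (by nlinarith)]
  rw [Finset.sum_congr rfl hterm, Finset.sum_sub_distrib, Finset.sum_const, ← Finset.mul_sum,
    sum_Icc_neg_abs, Int.card_Icc, show ((q : ℤ) + 1 - -q).toNat = 2 * q + 1 by omega]
  linear_combination (ℓ * (2 * q + 1) - H - (ℓ * q + r) : ℤ) * hH

section weight

variable {ℓ m : ℕ} {w : ℤ → ℂ}
  (hw : w = fun n : ℤ => if 0 < n then eC ((n : ℝ) * (m : ℝ) / (ℓ : ℝ)) else 0)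
include hw

lemma norm_weight_le_one (n : ℤ) : ‖w n‖ ≤ 1 := by
  subst hw
  dsimp only
  split_ifs <;> simp [norm_eC]

lemma wres_weight (H : ℕ) (n : ℤ) :
    wres w H n = if n ∈ Finset.Icc 1 (H : ℤ) then eC (n * m / ℓ) else 0 := by
  subst hw
  simp only [wres, Finset.mem_Icc]
  split_ifs <;> first | rfl | (exfalso; rw [abs_le] at *; omega)

lemma corrW_weight (H : ℕ) (a : ℤ) :
    corrW w H a = eC (a * m / ℓ) * ((max ((H : ℝ) - |(a : ℝ)|) 0 : ℝ) : ℂ) := by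
  have hterm : ∀ n ∈ Finset.Icc (-(H : ℤ)) H,
      wres w H n * starRingEnd ℂ (wres w H (n - a)) =
        if n ∈ Finset.Icc (max 1 (a + 1)) (min (H : ℤ) (H + a)) then eC (a * m / ℓ) else 0 := by
    intro n _
    simp only [wres_weight hw, Finset.mem_Icc]
    split_ifs <;> first
      | (exfalso; omega)
      | (rw [conj_eC, ← eC_add]; congr 1; push_cast; ring)
      | simp
  rw [corrW, Finset.sum_congr rfl hterm, Finset.sum_ite_mem,
    Finset.inter_eq_right.mpr (Finset.Icc_subset_Icc (by omega) (by omega)),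
    Finset.sum_const, Int.card_Icc, nsmul_eq_mul, mul_comm]
  congr 1
  have hlen : min (H : ℤ) (H + a) + 1 - max 1 (a + 1) = H - |a| := by
    rcases abs_cases a with ⟨h, _⟩ | ⟨h, _⟩ <;> rw [h] <;> omega
  rw [hlen]
  exact_mod_cast congrArg (Int.cast : ℤ → ℝ) (Int.toNat_eq_max _)

lemma sum_wres_weight (H : ℕ) :
    ∑ b ∈ Finset.Icc (-(H : ℤ)) H, wres w H b = ∑ h ∈ Finset.Icc 1 H, eC (h * m / ℓ) := by
  rw [Finset.sum_congr rfl fun b _ ↦ wres_weight hw H b, Finset.sum_ite_mem,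
    Finset.inter_eq_right.mpr (Finset.Icc_subset_Icc (by omega) le_rfl)]
  exact (Finset.sum_nbij' (↑) Int.toNat (fun h hh ↦ by simp only [Finset.mem_Icc] at *; omega)
    (fun b hb ↦ by simp only [Finset.mem_Icc] at *; omega) (fun h _ ↦ Int.toNat_natCast h)
    (fun b hb ↦ by simp only [Finset.mem_Icc] at hb; omega) (fun h _ ↦ by push_cast; rfl)).symm

lemma norm_sum_filter_dvd_corrW_sub_le (hℓ : 0 < ℓ) (H : ℕ) :
    ‖(∑ a ∈ (Finset.Icc (-(2 * H : ℤ)) (2 * H)).filter ((ℓ : ℤ) ∣ ·), corrW w H a) -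
      (((H : ℝ) ^ 2 / ℓ : ℝ) : ℂ)‖ ≤ H := by
  have hcorr : ∀ a ∈ (Finset.Icc (-(2 * H : ℤ)) (2 * H)).filter ((ℓ : ℤ) ∣ ·),
      corrW w H a = ((max ((H : ℤ) - |a|) 0 : ℤ) : ℂ) := by
    intro a ha
    obtain ⟨k, rfl⟩ := (Finset.mem_filter.mp ha).2
    have hone : eC (((ℓ * k : ℤ) : ℝ) * m / ℓ) = 1 := by
      rw [← eC_intCast (k * m)]; congr 1; push_cast; field_simp
    rw [corrW_weight hw, hone, one_mul]
    norm_cast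
  rw [Finset.sum_congr rfl hcorr, ← Int.cast_sum]
  have htriangle := mul_sum_filter_dvd_triangle hℓ H
  set S := ∑ a ∈ (Finset.Icc (-(2 * H : ℤ)) (2 * H)).filter ((ℓ : ℤ) ∣ ·), max ((H : ℤ) - |a|) 0
  set r := H % ℓ
  have hr : (r : ℝ) < ℓ := by exact_mod_cast Nat.mod_lt H hℓ
  have hrH : (r : ℝ) ≤ H := by exact_mod_cast Nat.mod_le H ℓ
  have hℓ' : (0 : ℝ) < ℓ := by exact_mod_cast hℓ
  have hS : (ℓ : ℝ) * S = H ^ 2 + r * (ℓ - r) := by exact_mod_cast htriangle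
  have hdefect : (S : ℝ) - (H : ℝ) ^ 2 / ℓ = r * (ℓ - r) / ℓ := by
    field_simp
    linear_combination hS
  rw [show ((S : ℂ) - (((H : ℝ) ^ 2 / ℓ : ℝ) : ℂ)) = (((S : ℝ) - (H : ℝ) ^ 2 / ℓ : ℝ) : ℂ) by
      push_cast; rfl, Complex.norm_real, Real.norm_eq_abs, hdefect]
  rw [abs_of_nonneg (by have := sub_pos.mpr hr; positivity), div_le_iff₀ hℓ']
  nlinarith

lemma sum_corrW_weight (hℓ : 0 < ℓ) (hm : ¬ ℓ ∣ m) (H : ℕ) :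
    ∑ a ∈ Finset.Icc (-(2 * H : ℤ)) (2 * H), corrW w H a =
      ((‖∑ h ∈ Finset.Icc 1 (H % ℓ), eC (h * m / ℓ)‖ ^ 2 : ℝ) : ℂ) := by
  rw [sum_corrW_eq_mul_conj, sum_wres_weight hw, sum_Icc_eC_eq_mod hℓ hm, Complex.mul_conj']
  push_cast
  rfl

lemma norm_sum_corrW_weight_le (hℓ : 0 < ℓ) (hm : ¬ ℓ ∣ m) (H : ℕ) :
    ‖∑ a ∈ Finset.Icc (-(2 * H : ℤ)) (2 * H), corrW w H a‖ ≤ (ℓ : ℝ) ^ 2 := by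
  have hpartial : ‖∑ h ∈ Finset.Icc 1 (H % ℓ), eC (h * m / ℓ)‖ ≤ ℓ := by
    calc _ ≤ ∑ h ∈ Finset.Icc 1 (H % ℓ), ‖eC (h * m / ℓ)‖ := norm_sum_le _ _
      _ = (H % ℓ : ℕ) := by simp [norm_eC]
      _ ≤ ℓ := by exact_mod_cast (Nat.mod_lt H hℓ).le
  rw [sum_corrW_weight hw hℓ hm, Complex.norm_real, Real.norm_eq_abs, abs_sq]
  exact pow_le_pow_left₀ (norm_nonneg _) hpartial 2

end weight

lemma not_forall_sq_div_le_mul_add {ℓ : ℝ} (hℓ : 0 < ℓ) (c : ℝ) :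
    ¬ ∀ H : ℕ, 0 < H → (H : ℝ) ^ 2 / ℓ ≤ c * H + ℓ := by
  intro h
  set H := ⌊ℓ * (c + ℓ)⌋₊ + 1
  have hbig : ℓ * (c + ℓ) < H := by exact_mod_cast Nat.lt_floor_add_one (ℓ * (c + ℓ))
  have hH : (1 : ℝ) ≤ H := by exact_mod_cast Nat.le_add_left 1 _
  have := h H (Nat.succ_pos _)
  rw [div_le_iff₀ hℓ] at this
  nlinarith [mul_lt_mul_of_pos_right hbig (by linarith : (0 : ℝ) < H),
    mul_le_mul_of_nonneg_left hH (sq_nonneg ℓ)]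

theorem stmt19 :
    ∃ C : ℝ, 0 < C ∧
      ∀ ℓ m : ℕ, 2 ≤ ℓ → 1 ≤ m → m < ℓ →
        ∀ w : ℤ → ℂ,
          (w = fun n : ℤ => if 0 < n then eC ((n : ℝ) * (m : ℝ) / (ℓ : ℝ)) else 0) →
          -- `w` is absolutely bounded by 1
          (∀ n : ℤ, Norm.norm (w n) ≤ 1) ∧
          (∀ H : ℕ, 0 < H →
            -- (i) the correlation of `w_H`
            (∀ a : ℤ,
              corrW w H a =
                eC ((a : ℝ) * (m : ℝ) / (ℓ : ℝ)) * ((max ((H : ℝ) - |(a : ℝ)|) 0 : ℝ) : ℂ)) ∧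
            -- (ii) `Σ_{a ≡ 0 (mod ℓ)} 𝒞_{w_H}(a) = H²/ℓ + O(H)` with absolute constant
            Norm.norm
                ((∑ a ∈ (Finset.Icc (-(2 * H : ℤ)) (2 * H : ℤ)).filter
                    (fun a => (ℓ : ℤ) ∣ a), corrW w H a) -
                  (((H : ℝ) ^ 2 / (ℓ : ℝ) : ℝ) : ℂ)) ≤ C * H ∧
            -- (iii) `Σ_a 𝒞_{w_H}(a) = |Σ_{h ≤ ℓ{H/ℓ}} e(hm/ℓ)|² ≪ ℓ²`
            (∑ a ∈ Finset.Icc (-(2 * H : ℤ)) (2 * H : ℤ), corrW w H a) =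
              (((Norm.norm
                (∑ h ∈ Finset.Icc 1 (H % ℓ), eC ((h : ℝ) * (m : ℝ) / (ℓ : ℝ)))) ^ 2 : ℝ) : ℂ) ∧
            Norm.norm (∑ a ∈ Finset.Icc (-(2 * H : ℤ)) (2 * H : ℤ), corrW w H a) ≤
              C * (ℓ : ℝ) ^ 2) ∧
          -- consequently, `w` is not an arithmetic weight
          ¬ ∃ C' : ℝ, ∀ H : ℕ, 0 < H →
              Norm.norm
                ((∑ a ∈ (Finset.Icc (-(2 * H : ℤ)) (2 * H : ℤ)).filter
                    (fun a => (ℓ : ℤ) ∣ a), corrW w H a) -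
                  (1 / (ℓ : ℂ)) *
                    ∑ a ∈ Finset.Icc (-(2 * H : ℤ)) (2 * H : ℤ), corrW w H a) ≤ C' * H := by
  refine ⟨1, one_pos, fun ℓ m hℓ hm hmℓ w hw ↦ ?_⟩
  have hℓ₀ : 0 < ℓ := by omega
  have hℓ' : (0 : ℝ) < ℓ := by exact_mod_cast hℓ₀
  have hmℓ' : ¬ ℓ ∣ m := Nat.not_dvd_of_pos_of_lt hm hmℓ
  have hdiag := norm_sum_filter_dvd_corrW_sub_le hw hℓ₀
  have htotal := norm_sum_corrW_weight_le hw hℓ₀ hmℓ'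
  refine ⟨norm_weight_le_one hw, fun H _ ↦ ⟨corrW_weight hw H, by simpa using hdiag H,
    sum_corrW_weight hw hℓ₀ hmℓ' H, by simpa using htotal H⟩, ?_⟩
  rintro ⟨C', hC'⟩
  refine not_forall_sq_div_le_mul_add hℓ' (1 + C') fun H hH ↦ ?_
  set A := ∑ a ∈ (Finset.Icc (-(2 * H : ℤ)) (2 * H)).filter ((ℓ : ℤ) ∣ ·), corrW w H a
  set B := ∑ a ∈ Finset.Icc (-(2 * H : ℤ)) (2 * H), corrW w H a
  set x : ℂ := (((H : ℝ) ^ 2 / ℓ : ℝ) : ℂ)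
  have hB : ‖1 / (ℓ : ℂ) * B‖ ≤ ℓ := by
    rw [norm_mul, one_div, norm_inv, Complex.norm_natCast, inv_mul_le_iff₀ hℓ', ← sq]
    exact htotal H
  calc (H : ℝ) ^ 2 / ℓ = ‖x‖ := by rw [Complex.norm_real, Real.norm_of_nonneg (by positivity)]
    _ ≤ ‖x - A‖ + ‖A - 1 / (ℓ : ℂ) * B‖ + ‖1 / (ℓ : ℂ) * B‖ := by
      simpa using norm_add₃_le (a := x - A) (b := A - 1 / (ℓ : ℂ) * B) (c := 1 / (ℓ : ℂ) * B)
    _ ≤ H + C' * H + ℓ := by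
      gcongr
      · rw [norm_sub_rev]; exact hdiag H
      · exact hC' H hH
    _ = (1 + C') * H + ℓ := by ring
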